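/- Let K ≥ 2 and let c_1, ..., c_K be i.i.d. uniform on [0,1], independent of the label. For p in the interior of the simplex and true class i, define the Pandora pairwise loss L_pandora(r) := 3 - 2r for 0 < r ≤ 1 and L_pandora(r) := r^{-2} for r > 1, and the score S_pandora(p, i) := (1/(3(K-1))) Σ_{j ≠ i} L_pandora(p_i / p_j). Then the expected optimal search cost S_unif(p, i) := E[c_i] + Σ_{j ≠ i} E[c_j · 1(c_i/c_j > p_i/p_j)] satisfies S_unif(p, i) = (1 + (K-1) · S_pandora(p, i)) / 2. -/

import Mathlib

open MeasureTheory

/-- The Pandora pairwise loss: `L(r) = 3 - 2r` for `r ≤ 1` and `r⁻²` for `r > 1`. -/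
noncomputable def Lpandora (r : ℝ) : ℝ :=
  if r ≤ 1 then 3 - 2 * r else r ^ (-(2 : ℝ))

/-- Pandora's Regret: `S(p, i) = (1/(3(K-1))) Σ_{j ≠ i} L_pandora(p i / p j)`. -/
noncomputable def Spandora {K : ℕ} (p : Fin K → ℝ) (i : Fin K) : ℝ :=
  (1 / (3 * ((K : ℝ) - 1))) *
    ∑ j ∈ Finset.univ.filter (fun j => j ≠ i), Lpandora (p i / p j)

lemma int_Icc_id : ∫ y in Set.Icc (0:ℝ) 1, y = 1/2 := by
  rw [integral_Icc_eq_integral_Ioc, ← intervalIntegral.integral_of_le (by norm_num : (0:ℝ) ≤ 1),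
    integral_id]
  norm_num

lemma int_sq (a r : ℝ) (ha : 0 ≤ a) (hr : 0 < r) :
    ∫ x in Set.Icc (0:ℝ) a, (x/r)^2/2 = a^3/(6*r^2) := by
  rw [integral_Icc_eq_integral_Ioc, ← intervalIntegral.integral_of_le ha]
  have hrne : r ≠ 0 := hr.ne'
  have : ∀ x : ℝ, (x/r)^2/2 = (1/(2*r^2)) * x^2 := by
    intro x; rw [div_pow]; ring
  simp_rw [this]
  rw [intervalIntegral.integral_const_mul, integral_pow]
  field_simp
  push_cast; ring

lemma inner_eq (r x : ℝ) (hr : 0 < r) (hx0 : 0 ≤ x) :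
    ∫ y in Set.Icc (0:ℝ) 1, y * (if r < x / y then 1 else 0)
      = (min 1 (x/r))^2 / 2 := by
  have h1 : Set.EqOn (fun y : ℝ => y * (if r < x / y then 1 else 0))
      (Set.indicator (Set.Iio (x/r)) id) (Set.Icc 0 1) := by
    intro y hy
    rcases eq_or_lt_of_le hy.1 with h0 | h0
    · simp [← h0, Set.indicator_apply]
    · have : r < x / y ↔ y < x / r := by
        rw [lt_div_iff₀ h0, lt_div_iff₀ hr, mul_comm]
      simp only [Set.indicator_apply, Set.mem_Iio, this, id]
      split <;> simp
  rw [setIntegral_congr_fun measurableSet_Icc h1,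
    setIntegral_indicator measurableSet_Iio]
  rcases le_or_gt (x/r) 1 with hc | hc
  · have hxr : 0 ≤ x / r := div_nonneg hx0 hr.le
    have hset : Set.Icc (0:ℝ) 1 ∩ Set.Iio (x/r) = Set.Ico 0 (x/r) := by
      ext y
      simp only [Set.mem_inter_iff, Set.mem_Icc, Set.mem_Iio, Set.mem_Ico]
      constructor
      · rintro ⟨⟨h1, _⟩, h2⟩; exact ⟨h1, h2⟩
      · rintro ⟨h1, h2⟩; exact ⟨⟨h1, le_trans h2.le hc⟩, h2⟩
    rw [hset, integral_Ico_eq_integral_Ioo, ← integral_Ioc_eq_integral_Ioo,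
      ← intervalIntegral.integral_of_le hxr]
    simp only [id_eq]
    rw [integral_id, min_eq_right hc]
    ring
  · have hset : Set.Icc (0:ℝ) 1 ∩ Set.Iio (x/r) = Set.Icc 0 1 := by
      apply Set.inter_eq_self_of_subset_left
      intro y hy
      exact lt_of_le_of_lt hy.2 hc
    rw [hset]
    simp only [id_eq]
    rw [int_Icc_id, min_eq_left hc.le]
    norm_num

lemma outer_eq (r : ℝ) (hr : 0 < r) :
    ∫ x in Set.Icc (0:ℝ) 1, (min 1 (x/r))^2/2 = Lpandora r / 6 := by
  have hcont : Continuous (fun x : ℝ => (min 1 (x/r))^2/2) :=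
    ((continuous_const.min (continuous_id.div_const r)).pow 2).div_const 2
  rcases le_or_gt r 1 with h1 | h1
  · have hsplit : Set.Icc (0:ℝ) 1 = Set.Icc 0 r ∪ Set.Ioc r 1 :=
      (Set.Icc_union_Ioc_eq_Icc hr.le h1).symm
    have hdisj : Disjoint (Set.Icc (0:ℝ) r) (Set.Ioc r 1) := by
      rw [Set.disjoint_left]
      rintro y ⟨_, hy2⟩ ⟨hy3, _⟩
      exact absurd hy2 (not_le.mpr hy3)
    rw [hsplit, setIntegral_union hdisj measurableSet_Ioc
      (hcont.integrableOn_Icc) (hcont.integrableOn_Ioc)]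
    have e1 : ∫ x in Set.Icc (0:ℝ) r, (min 1 (x/r))^2/2 = r/6 := by
      have : Set.EqOn (fun x : ℝ => (min 1 (x/r))^2/2) (fun x : ℝ => (x/r)^2/2)
          (Set.Icc 0 r) := by
        intro x hx
        simp only
        rw [min_eq_right ((div_le_one hr).mpr hx.2)]
      rw [setIntegral_congr_fun measurableSet_Icc this, int_sq r r hr.le hr]
      field_simp
    have e2 : ∫ x in Set.Ioc r 1, (min 1 (x/r))^2/2 = (1 - r)/2 := by
      have : Set.EqOn (fun x : ℝ => (min 1 (x/r))^2/2) (fun _ : ℝ => (1:ℝ)/2)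
          (Set.Ioc r 1) := by
        intro x hx
        simp only
        rw [min_eq_left ((one_le_div hr).mpr hx.1.le)]
        norm_num
      rw [setIntegral_congr_fun measurableSet_Ioc this, setIntegral_const,
        measureReal_def, Real.volume_Ioc, ENNReal.toReal_ofReal (by linarith)]
      simp [smul_eq_mul]
      ring
    rw [e1, e2, Lpandora, if_pos h1]
    ring
  · have : Set.EqOn (fun x : ℝ => (min 1 (x/r))^2/2) (fun x : ℝ => (x/r)^2/2)
        (Set.Icc 0 1) := by
      intro x hx
      simp only
      rw [min_eq_right ((div_le_one hr).mpr (le_trans hx.2 h1.le))]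
    rw [setIntegral_congr_fun measurableSet_Icc this, int_sq 1 r zero_le_one hr,
      Lpandora, if_neg (not_le.mpr h1)]
    rw [Real.rpow_neg hr.le, ← Real.rpow_natCast r 2]
    norm_num
    ring

lemma prod_eq (r : ℝ) (hr : 0 < r) :
    ∫ q : ℝ × ℝ, q.2 * (if r < q.1 / q.2 then 1 else 0)
      ∂((volume.restrict (Set.Icc (0:ℝ) 1)).prod (volume.restrict (Set.Icc (0:ℝ) 1)))
      = Lpandora r / 6 := by
  set f : ℝ × ℝ → ℝ := fun q => q.2 * (if r < q.1 / q.2 then 1 else 0) with hf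
  have hfmeas : Measurable f := by
    apply measurable_snd.mul
    exact Measurable.ite (measurableSet_lt measurable_const
      (measurable_fst.div measurable_snd)) measurable_const measurable_const
  have hint : Integrable f ((volume.restrict (Set.Icc (0:ℝ) 1)).prod
      (volume.restrict (Set.Icc (0:ℝ) 1))) := by
    rw [Measure.prod_restrict]
    apply Measure.integrableOn_of_bounded (M := 1)
    · rw [Measure.prod_prod, Real.volume_Icc]
      norm_num
    · exact hfmeas.aestronglyMeasurable
    · filter_upwards [ae_restrict_mem (measurableSet_Icc.prod measurableSet_Icc)] with q hq
      have h2 : q.2 ∈ Set.Icc (0:ℝ) 1 := hq.2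
      rw [hf]
      simp only [Real.norm_eq_abs]
      rw [abs_mul]
      calc |q.2| * |if r < q.1 / q.2 then (1:ℝ) else 0| ≤ 1 * 1 := by
            apply mul_le_mul
            · rw [abs_le]; constructor <;> [linarith [h2.1]; exact h2.2]
            · split <;> simp
            · exact abs_nonneg _
            · norm_num
        _ = 1 := by norm_num
  rw [integral_prod f hint]
  have : Set.EqOn (fun x : ℝ => ∫ y in Set.Icc (0:ℝ) 1, f (x, y))
      (fun x : ℝ => (min 1 (x/r))^2/2) (Set.Icc 0 1) := by
    intro x hx
    exact inner_eq r x hr hx.1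
  rw [setIntegral_congr_fun measurableSet_Icc this]
  exact outer_eq r hr

/-- **Uniform-cost form of Pandora's Regret.** For `K ≥ 2` and i.i.d. `Uniform[0,1]`
testing costs `c k`, the expected optimal search cost
`S_unif(p, i) = E[c i] + Σ_{j ≠ i} E[c j · 1(c i/c j > p i/p j)]` satisfies
`S_unif(p, i) = (1 + (K-1)·S_pandora(p, i)) / 2`. -/
theorem pandora_uniform_form (K : ℕ) (hK : 2 ≤ K) {Ω : Type*} [MeasurableSpace Ω]
    (μ : Measure Ω) [IsProbabilityMeasure μ] (c : Fin K → Ω → ℝ)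
    (hmeas : ∀ k, Measurable (c k))
    (hindep : ProbabilityTheory.iIndepFun c μ)
    (hlaw : ∀ k, μ.map (c k) = volume.restrict (Set.Icc (0 : ℝ) 1))
    (p : Fin K → ℝ) (hp : ∀ k, 0 < p k) (hps : ∑ k, p k = 1) (i : Fin K) :
    (∫ ω, c i ω ∂μ) + ∑ j ∈ Finset.univ.filter (fun j => j ≠ i),
        ∫ ω, c j ω * (if p i / p j < c i ω / c j ω then 1 else 0) ∂μ
      = (1 + ((K : ℝ) - 1) * Spandora p i) / 2 := by
  have hEi : (∫ ω, c i ω ∂μ) = 1/2 := by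
    have : ∫ ω, c i ω ∂μ = ∫ x, x ∂(μ.map (c i)) := by
      rw [integral_map (f := fun x => x) (hmeas i).aemeasurable
        measurable_id.aestronglyMeasurable]
    rw [this, hlaw i, int_Icc_id]
  have hterm : ∀ j ∈ Finset.univ.filter (fun j => j ≠ i),
      (∫ ω, c j ω * (if p i / p j < c i ω / c j ω then 1 else 0) ∂μ)
        = Lpandora (p i / p j) / 6 := by
    intro j hj
    rw [Finset.mem_filter] at hj
    have hji : i ≠ j := fun h => hj.2 h.symm
    have hindep2 : ProbabilityTheory.IndepFun (c i) (c j) μ := hindep.indepFun hji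
    have hmap : μ.map (fun ω => (c i ω, c j ω))
        = (volume.restrict (Set.Icc (0:ℝ) 1)).prod (volume.restrict (Set.Icc (0:ℝ) 1)) := by
      refine ((ProbabilityTheory.indepFun_iff_map_prod_eq_prod_map_map
        (hmeas i).aemeasurable (hmeas j).aemeasurable).mp hindep2).trans ?_
      rw [hlaw i, hlaw j]
    set r := p i / p j with hr
    have hr0 : 0 < r := div_pos (hp i) (hp j)
    set f : ℝ × ℝ → ℝ := fun q => q.2 * (if r < q.1 / q.2 then 1 else 0) with hfdef
    have hfmeas : Measurable f := by
      apply measurable_snd.mul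
      exact Measurable.ite (measurableSet_lt measurable_const
        (measurable_fst.div measurable_snd)) measurable_const measurable_const
    have : ∫ ω, c j ω * (if r < c i ω / c j ω then 1 else 0) ∂μ
        = ∫ q, f q ∂(μ.map (fun ω => (c i ω, c j ω))) := by
      rw [integral_map ((hmeas i).prodMk (hmeas j)).aemeasurable
        hfmeas.aestronglyMeasurable]
    rw [this, hmap]
    exact prod_eq r hr0
  rw [hEi, Finset.sum_congr rfl hterm]
  have hsum : ∑ j ∈ Finset.univ.filter (fun j => j ≠ i), Lpandora (p i / p j) / 6
      = (∑ j ∈ Finset.univ.filter (fun j => j ≠ i), Lpandora (p i / p j)) / 6 := by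
    rw [Finset.sum_div]
  rw [hsum, Spandora]
  have hKne : (3 : ℝ) * ((K : ℝ) - 1) ≠ 0 := by
    have : (2 : ℝ) ≤ (K : ℝ) := by exact_mod_cast hK
    intro h
    have : (K : ℝ) - 1 = 0 := by
      rcases mul_eq_zero.mp h with h' | h'
      · norm_num at h'
      · exact h'
    linarith
  have hK1 : (K : ℝ) - 1 ≠ 0 := fun h => hKne (by rw [h]; ring)
  field_simp
  ring
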